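/- With B and D as above (for n ≥ 6), D − x_1^{n−4}x_3 belongs to the ideal x_2·(x_4,…,x_n) of K[x_1,…,x_n]. -/

import Mathlib

open MvPolynomial

/-- The variable `x_k` (1-based indexing, `1 ≤ k ≤ n`) of `K[x_1,…,x_n]`. -/
noncomputable def xv (K : Type*) [Field K] (n : ℕ) (hn : 0 < n) (k : ℕ) :
    MvPolynomial (Fin n) K :=
  X ⟨(k - 1) % n, Nat.mod_lt _ hn⟩

/-- The `(n-3) × (n-3)` matrix `B`: diagonal entries `x₁` except the last one `x₃`,
subdiagonal entries `x₂`, superdiagonal entries `x₃x₅, …, x₃x_{n-1}` (except in the last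
column), last column `(x₂, x₄, x₅, …, x_{n-2}, x₃)`, and zeros elsewhere
(rows and columns are 0-based here). -/
noncomputable def Bmat (K : Type*) [Field K] (n : ℕ) (hn : 0 < n) :
    Matrix (Fin (n - 3)) (Fin (n - 3)) (MvPolynomial (Fin n) K) :=
  fun i j =>
    if (i : ℕ) = j ∧ (j : ℕ) = n - 4 then xv K n hn 3
    else if (i : ℕ) = j then xv K n hn 1
    else if (i : ℕ) = (j : ℕ) + 1 then xv K n hn 2
    else if (j : ℕ) = (i : ℕ) + 1 ∧ (j : ℕ) ≠ n - 4 then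
      xv K n hn 3 * xv K n hn ((i : ℕ) + 5)
    else if (j : ℕ) = n - 4 ∧ (i : ℕ) = 0 then xv K n hn 2
    else if (j : ℕ) = n - 4 ∧ 1 ≤ (i : ℕ) then xv K n hn ((i : ℕ) + 3)
    else 0

/-- `D = det B - (-1)ⁿ x₂^{n-3}`. -/
noncomputable def Dpoly (K : Type*) [Field K] (n : ℕ) (hn : 0 < n) :
    MvPolynomial (Fin n) K :=
  (Bmat K n hn).det - (-1 : MvPolynomial (Fin n) K) ^ n * (xv K n hn 2) ^ (n - 3)

/-- The generating set of the squarefree monomial ideal `I_n`: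
`x₁x_j (3 ≤ j ≤ n-1)`, `x₂x_j (4 ≤ j ≤ n)`, `x₃x_j (5 ≤ j ≤ n)`, `x_jx_n (4 ≤ j ≤ n-2)`. -/
def Igens (K : Type*) [Field K] (n : ℕ) (hn : 0 < n) : Set (MvPolynomial (Fin n) K) :=
  {p | ∃ j, 3 ≤ j ∧ j ≤ n - 1 ∧ p = xv K n hn 1 * xv K n hn j} ∪
  {p | ∃ j, 4 ≤ j ∧ j ≤ n ∧ p = xv K n hn 2 * xv K n hn j} ∪
  {p | ∃ j, 5 ≤ j ∧ j ≤ n ∧ p = xv K n hn 3 * xv K n hn j} ∪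
  {p | ∃ j, 4 ≤ j ∧ j ≤ n - 2 ∧ p = xv K n hn j * xv K n hn n}

/-- The ideal `I_n ⊆ K[x_1,…,x_n]`. -/
noncomputable def Iideal (K : Type*) [Field K] (n : ℕ) (hn : 0 < n) :
    Ideal (MvPolynomial (Fin n) K) :=
  Ideal.span (Igens K n hn)

/-- `q_i = ∑_{j=1}^{n-3} b_{ij} x_{3+j}` (with `j` the 1-based column index). -/
noncomputable def qpoly (K : Type*) [Field K] (n : ℕ) (hn : 0 < n) (i : Fin (n - 3)) :
    MvPolynomial (Fin n) K :=
  ∑ j : Fin (n - 3), Bmat K n hn i j * xv K n hn ((j : ℕ) + 4)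

section Aux

open Finset

variable {K : Type*} [Field K] {n : ℕ}

lemma Bmat_diag (h0 : 0 < n) (i j : Fin (n-3)) (hij : (i:ℕ) = (j:ℕ)) (h : (i:ℕ) < n - 4) :
    Bmat K n h0 i j = xv K n h0 1 := by
  have hi := i.isLt; have hj := j.isLt
  simp only [Bmat]; split_ifs <;> first | rfl | omega

lemma Bmat_diag_last (h0 : 0 < n) (hn : 6 ≤ n) (i j : Fin (n-3)) (hij : (i:ℕ) = (j:ℕ))
    (h : (i:ℕ) = n - 4) : Bmat K n h0 i j = xv K n h0 3 := by
  have hi := i.isLt; have hj := j.isLt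
  simp only [Bmat]; split_ifs <;> first | rfl | omega

lemma Bmat_sub (h0 : 0 < n) (i j : Fin (n-3)) (hij : (i:ℕ) = (j:ℕ) + 1) :
    Bmat K n h0 i j = xv K n h0 2 := by
  have hi := i.isLt; have hj := j.isLt
  simp only [Bmat]; split_ifs <;> first | rfl | omega

lemma Bmat_corner (hn : 6 ≤ n) (h0 : 0 < n) (i j : Fin (n-3)) (hi0 : (i:ℕ) = 0)
    (hj : (j:ℕ) = n - 4) : Bmat K n h0 i j = xv K n h0 2 := by
  have hi := i.isLt; have hj' := j.isLt
  simp only [Bmat]; split_ifs <;> first | rfl | omega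

lemma Bmat_sup (h0 : 0 < n) (i j : Fin (n-3)) (hij : (j:ℕ) = (i:ℕ) + 1)
    (hj : (j:ℕ) ≠ n - 4) : Bmat K n h0 i j = xv K n h0 3 * xv K n h0 ((i:ℕ) + 5) := by
  have hi := i.isLt; have hj' := j.isLt
  simp only [Bmat]; split_ifs <;> first | rfl | omega

lemma Bmat_last (hn : 6 ≤ n) (h0 : 0 < n) (i j : Fin (n-3)) (hj : (j:ℕ) = n - 4)
    (hi1 : 1 ≤ (i:ℕ)) (hi2 : (i:ℕ) < n - 4) : Bmat K n h0 i j = xv K n h0 ((i:ℕ) + 3) := by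
  have hi := i.isLt; have hj' := j.isLt
  simp only [Bmat]; split_ifs <;> first | rfl | omega

lemma Bmat_eq_zero (h0 : 0 < n) (i j : Fin (n-3))
    (h : ¬((i:ℕ) = (j:ℕ) ∨ (i:ℕ) = (j:ℕ) + 1 ∨ ((j:ℕ) = (i:ℕ) + 1 ∧ (j:ℕ) ≠ n - 4) ∨
      (j:ℕ) = n - 4)) : Bmat K n h0 i j = 0 := by
  have hi := i.isLt; have hj := j.isLt
  simp only [Bmat]; split_ifs <;> first | rfl | omega

lemma prod_fin_split {R : Type*} [CommRing R] {m : ℕ} (hm : 0 < m) (f : Fin m → R) (a b : R)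
    (ha : ∀ i : Fin m, (i:ℕ) < m - 1 → f i = a) (hb : ∀ i : Fin m, (i:ℕ) = m - 1 → f i = b) :
    ∏ i, f i = a ^ (m - 1) * b := by
  have hL : ((⟨m-1, by omega⟩ : Fin m) : ℕ) = m - 1 := rfl
  rw [← Finset.mul_prod_erase Finset.univ f (Finset.mem_univ (⟨m-1, by omega⟩ : Fin m)),
    hb _ hL, mul_comm]
  congr 1
  rw [Finset.prod_congr rfl (fun i hi => ha i ?_), Finset.prod_const,
    Finset.card_erase_of_mem (Finset.mem_univ _), Finset.card_univ, Fintype.card_fin]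
  have h1 : i ≠ (⟨m-1, by omega⟩ : Fin m) := (Finset.mem_erase.mp hi).1
  have h2 : (i:ℕ) ≠ m - 1 := fun hc => h1 (Fin.ext hc)
  have := i.isLt
  omega

lemma rot_val {m k : ℕ} (h : m = k + 1) (i : Fin m) :
    ((finRotate m i : Fin m) : ℕ) = if (i:ℕ) = m - 1 then 0 else (i:ℕ) + 1 := by
  subst h
  rw [finRotate_succ_apply, Fin.val_add_one]
  simp only [Nat.add_sub_cancel]
  rcases eq_or_ne i (Fin.last k) with h' | h'
  · rw [if_pos h', if_pos (by simp [h'])]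
  · rw [if_neg h', if_neg (fun hc => h' (Fin.ext (by simpa using hc)))]

lemma rot_sign {m k : ℕ} (h : m = k + 1) :
    Equiv.Perm.sign (finRotate m) = (-1) ^ k := by
  subst h; simpa using sign_finRotate (k + 1)

lemma prod_mem_span_mul (hn : 6 ≤ n) (h0 : 0 < n) (σ : Equiv.Perm (Fin (n-3)))
    (hσ1 : σ ≠ 1) (hσc : σ ≠ finRotate (n-3)) :
    (∏ c, Bmat K n h0 (σ c) c) ∈
      Ideal.span {xv K n h0 2} *
        Ideal.span {p | ∃ j, 4 ≤ j ∧ j ≤ n ∧ p = xv K n h0 j} := by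
  classical
  by_cases hz : ∃ c, Bmat K n h0 (σ c) c = 0
  · obtain ⟨c, hc⟩ := hz
    rw [Finset.prod_eq_zero (f := fun c => Bmat K n h0 (σ c) c) (Finset.mem_univ c) hc]
    exact zero_mem _
  push_neg at hz
  have hpat : ∀ c : Fin (n-3), ((σ c : ℕ) = (c:ℕ) ∨ (σ c : ℕ) = (c:ℕ) + 1 ∨
      ((c:ℕ) = (σ c : ℕ) + 1 ∧ (c:ℕ) ≠ n - 4) ∨ (c:ℕ) = n - 4) := by
    intro c
    by_contra h
    exact hz c (Bmat_eq_zero h0 _ _ h)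
  have hsum : ∑ c : Fin (n-3), ((σ c : ℕ)) = ∑ c : Fin (n-3), (c:ℕ) := Equiv.sum_comp σ _
  -- existence of an x₂ position
  have hc1 : ∃ c1 : Fin (n-3), (σ c1 : ℕ) = (c1:ℕ) + 1 ∨ ((c1:ℕ) = n - 4 ∧ (σ c1 : ℕ) = 0) := by
    by_contra hno
    push_neg at hno
    have hle : ∀ c ∈ (Finset.univ : Finset (Fin (n-3))), (σ c : ℕ) ≤ (c:ℕ) := by
      intro c _
      have h1 := hpat c; have h2 := hno c
      have := (σ c).isLt; have := c.isLt
      omega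
    have heq := (Finset.sum_eq_sum_iff_of_le hle).mp hsum
    exact hσ1 (Equiv.ext fun c => Fin.ext (heq c (Finset.mem_univ c)))
  -- existence of an x₄..xₙ position
  have hc2 : ∃ c2 : Fin (n-3), ((c2:ℕ) = (σ c2 : ℕ) + 1 ∧ (c2:ℕ) ≠ n - 4) ∨
      ((c2:ℕ) = n - 4 ∧ 1 ≤ (σ c2 : ℕ) ∧ (σ c2 : ℕ) < n - 4) := by
    by_contra hno
    push_neg at hno
    have hLlt : n - 4 < n - 3 := by omega
    have hLval : (((⟨n-4, hLlt⟩ : Fin (n-3))) : ℕ) = n - 4 := rfl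
    have hcase : (σ ⟨n-4, hLlt⟩ : ℕ) = 0 ∨ (σ ⟨n-4, hLlt⟩ : ℕ) = n - 4 := by
      have h1 := hpat ⟨n-4, hLlt⟩; have h2 := hno ⟨n-4, hLlt⟩
      have := (σ ⟨n-4, hLlt⟩).isLt
      omega
    rcases hcase with hL0 | hLd
    · apply hσc
      have hle : ∀ c ∈ (Finset.univ : Finset (Fin (n-3))), (σ c : ℕ) ≤ ((finRotate (n-3)) c : ℕ) := by
        intro c _
        rw [rot_val (show n - 3 = (n-4) + 1 by omega)]
        have h1 := hpat c; have h2 := hno c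
        have := (σ c).isLt; have := c.isLt
        split_ifs with hc
        · have h3 : (σ c : ℕ) = 0 := by
            rw [show c = ⟨n-4, hLlt⟩ from Fin.ext (by omega)]; exact hL0
          omega
        · omega
      have hsum2 : ∑ c : Fin (n-3), ((σ c : ℕ)) = ∑ c : Fin (n-3), ((finRotate (n-3)) c : ℕ) := by
        rw [hsum, Equiv.sum_comp (finRotate (n-3)) (fun x : Fin (n-3) => (x:ℕ))]
      have heq := (Finset.sum_eq_sum_iff_of_le hle).mp hsum2
      exact Equiv.ext fun c => Fin.ext (heq c (Finset.mem_univ c))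
    · exfalso; apply hσ1
      have hge : ∀ c ∈ (Finset.univ : Finset (Fin (n-3))), (c:ℕ) ≤ (σ c : ℕ) := by
        intro c _
        have h1 := hpat c; have h2 := hno c
        have := (σ c).isLt; have := c.isLt
        rcases eq_or_ne ((c:ℕ)) (n-4) with hc | hc
        · have h3 : (σ c : ℕ) = n - 4 := by
            rw [show c = ⟨n-4, hLlt⟩ from Fin.ext (by omega)]; exact hLd
          omega
        · omega
      have heq := (Finset.sum_eq_sum_iff_of_le hge).mp hsum.symm
      exact Equiv.ext fun c => Fin.ext (heq c (Finset.mem_univ c)).symm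
  obtain ⟨c1, hc1⟩ := hc1
  obtain ⟨c2, hc2⟩ := hc2
  have hne : c2 ≠ c1 := by
    intro h; subst h
    have := (σ c2).isLt; have := c2.isLt
    rcases hc1 with h | h <;> rcases hc2 with h' | h' <;> omega
  have hB1 : Bmat K n h0 (σ c1) c1 = xv K n h0 2 := by
    rcases hc1 with h | h
    · exact Bmat_sub h0 _ _ h
    · exact Bmat_corner hn h0 _ _ h.2 h.1
  have hB2 : Bmat K n h0 (σ c2) c2 ∈
      Ideal.span {p | ∃ j, 4 ≤ j ∧ j ≤ n ∧ p = xv K n h0 j} := by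
    have hlt := c2.isLt; have hlt' := (σ c2).isLt
    rcases hc2 with h | h
    · rw [Bmat_sup h0 _ _ h.1 h.2]
      exact Ideal.mul_mem_left _ _
        (Ideal.subset_span ⟨(σ c2 : ℕ) + 5, by omega, by omega, rfl⟩)
    · rw [Bmat_last hn h0 _ _ h.1 h.2.1 h.2.2]
      exact Ideal.subset_span ⟨(σ c2 : ℕ) + 3, by omega, by omega, rfl⟩
  rw [← Finset.mul_prod_erase Finset.univ _ (Finset.mem_univ c1),
    ← Finset.mul_prod_erase _ _ (Finset.mem_erase.mpr ⟨hne, Finset.mem_univ c2⟩), hB1]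
  exact Ideal.mul_mem_mul (Ideal.subset_span (Set.mem_singleton _))
    (Ideal.mul_mem_right _ _ hB2)

end Aux

/-- For `n ≥ 6`, `D - x₁^{n-4} x₃` belongs to the ideal `x₂·(x₄,…,x_n)`. -/
theorem Dpoly_sub_mem {K : Type*} [Field K] (n : ℕ) (hn : 6 ≤ n) :
    Dpoly K n (by omega) - xv K n (by omega) 1 ^ (n - 4) * xv K n (by omega) 3 ∈
      Ideal.span {xv K n (by omega) 2} *
        Ideal.span {p | ∃ j, 4 ≤ j ∧ j ≤ n ∧ p = xv K n (by omega : (0:ℕ) < n) j} := by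
  classical
  have h0 : 0 < n := by omega
  show Dpoly K n h0 - xv K n h0 1 ^ (n - 4) * xv K n h0 3 ∈
      Ideal.span {xv K n h0 2} *
        Ideal.span {p | ∃ j, 4 ≤ j ∧ j ≤ n ∧ p = xv K n h0 j}
  have hm : 0 < n - 3 := by omega
  have hrot_ne : (finRotate (n-3)) ≠ (1 : Equiv.Perm (Fin (n-3))) := by
    intro h
    have h1 : ((finRotate (n-3)) ⟨0, hm⟩ : ℕ) = 0 := by rw [h]; rfl
    rw [rot_val (show n - 3 = (n-4) + 1 by omega)] at h1
    simp only at h1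
    split_ifs at h1 <;> omega
  set F : Equiv.Perm (Fin (n-3)) → MvPolynomial (Fin n) K :=
    fun σ => Equiv.Perm.sign σ • ∏ i, Bmat K n h0 (σ i) i with hF
  have hmemrot : finRotate (n-3) ∈ (Finset.univ.erase (1 : Equiv.Perm (Fin (n-3)))) :=
    Finset.mem_erase.mpr ⟨hrot_ne, Finset.mem_univ _⟩
  have hsplit : ∑ σ : Equiv.Perm (Fin (n-3)), F σ =
      F 1 + (F (finRotate (n-3)) +
        ∑ σ ∈ (Finset.univ.erase 1).erase (finRotate (n-3)), F σ) := by
    rw [Finset.add_sum_erase _ F hmemrot, Finset.add_sum_erase _ F (Finset.mem_univ 1)]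
  have hF1 : F 1 = xv K n h0 1 ^ (n - 4) * xv K n h0 3 := by
    rw [hF]
    simp only [Equiv.Perm.sign_one, one_smul, Equiv.Perm.one_apply]
    rw [show n - 4 = n - 3 - 1 from by omega]
    exact prod_fin_split hm _ _ _
      (fun i hi => Bmat_diag h0 i i rfl (by omega))
      (fun i hi => Bmat_diag_last h0 hn i i rfl (by omega))
  have hFc : F (finRotate (n-3)) =
      (-1 : MvPolynomial (Fin n) K) ^ n * xv K n h0 2 ^ (n - 3) := by
    have hprod : (∏ i, Bmat K n h0 ((finRotate (n-3)) i) i) = xv K n h0 2 ^ (n - 3) := by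
      have h1 : (∏ i, Bmat K n h0 ((finRotate (n-3)) i) i) =
          xv K n h0 2 ^ (n - 3 - 1) * xv K n h0 2 := by
        refine prod_fin_split hm _ _ _ (fun i hi => ?_) (fun i hi => ?_)
        · refine Bmat_sub h0 _ _ ?_
          rw [rot_val (show n - 3 = (n-4) + 1 by omega)]
          split_ifs with h <;> omega
        · refine Bmat_corner hn h0 _ _ ?_ (by omega)
          rw [rot_val (show n - 3 = (n-4) + 1 by omega)]
          split_ifs with h <;> omega
      rw [h1, ← pow_succ]
      congr 1
      omega
    have hs : Equiv.Perm.sign (finRotate (n-3)) = (-1) ^ (n - 4) :=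
      rot_sign (show n - 3 = (n-4) + 1 by omega)
    have hsign : ((-1 : ℤˣ) ^ (n - 4) : ℤˣ) • (xv K n h0 2 ^ (n - 3)) =
        ((-1 : MvPolynomial (Fin n) K) ^ (n - 4)) * xv K n h0 2 ^ (n - 3) := by
      rw [Units.smul_def, zsmul_eq_mul]
      push_cast
      ring
    have hpow : (-1 : MvPolynomial (Fin n) K) ^ n = (-1) ^ (n - 4) := by
      rcases Nat.even_or_odd n with he | ho
      · rw [he.neg_one_pow, (Nat.even_iff.mpr (by
          have := Nat.even_iff.mp he; omega) : Even (n - 4)).neg_one_pow]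
      · rw [ho.neg_one_pow, (Nat.odd_iff.mpr (by
          have := Nat.odd_iff.mp ho; omega) : Odd (n - 4)).neg_one_pow]
    rw [hF]
    simp only [hprod, hs, hsign, hpow]
  have key : Dpoly K n h0 - xv K n h0 1 ^ (n - 4) * xv K n h0 3 =
      ∑ σ ∈ (Finset.univ.erase 1).erase (finRotate (n-3)), F σ := by
    rw [Dpoly, Matrix.det_apply]
    rw [show (∑ σ : Equiv.Perm (Fin (n-3)), Equiv.Perm.sign σ • ∏ i, Bmat K n h0 (σ i) i)
        = ∑ σ : Equiv.Perm (Fin (n-3)), F σ from rfl]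
    rw [hsplit, hF1, hFc]
    ring
  rw [key]
  refine Ideal.sum_mem _ (fun σ hσ => ?_)
  have h2 := Finset.mem_erase.mp hσ
  have h1 := Finset.mem_erase.mp h2.2
  have hmem := prod_mem_span_mul (K := K) hn h0 σ h1.1 h2.1
  rcases Int.units_eq_one_or (Equiv.Perm.sign σ) with h | h
  · have hFσ : F σ = ∏ i, Bmat K n h0 (σ i) i := by
      rw [hF]; simp only [h, one_smul]
    rw [hFσ]; exact hmem
  · have hFσ : F σ = -(∏ i, Bmat K n h0 (σ i) i) := by
      rw [hF]; simp only [h]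
      rw [Units.smul_def, zsmul_eq_mul]
      push_cast
      ring
    rw [hFσ]; exact neg_mem hmem
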